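/- arXiv:2504.00965 — 6 statements merged into one kernel-verified Lean document; each statement's English description precedes it below -/
import Mathlib

section
/- Let α, β, γ, δ be natural numbers with α + β + γ < 2(δ − 1), let z ∈ ℂ, and suppose β ≤ α ≤ β + γ. Then ∫_ℂ w^α · conj(w)^β · (1 + z·conj(w))^γ / (1 + |w|²)^δ dA(w) = π · (γ choose (α − β)) · (α! · (δ − α − 2)!)/(δ − 1)! · z^(α−β). -/
/-!
Expanding `(1 + z w̄)^γ` binomially reduces the integral to the moments
`∫ w^a w̄^b / (1 + |w|²)^δ`. A rotation `w ↦ c w` with `c^a c̄^b = -1` preserves Lebesgue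
measure and negates the integrand, so the moments with `a ≠ b` vanish; only the term with
`β + k = α` survives. The diagonal moment is radial, and passing to polar coordinates and
then to `t = r²` turns it into `π ∫₀^∞ t^a / (1 + t)^δ dt`, a beta integral evaluated by
integrating by parts in `a`.
-/

open MeasureTheory Complex Set Filter Topology ComplexConjugate

lemma integrableOn_pow_div_one_add_pow {a d : ℕ} (h : a + 2 ≤ d) :
    IntegrableOn (fun t : ℝ => t ^ a / (1 + t) ^ d) (Ioi 0) := by
  have hmeas :
      AEStronglyMeasurable (fun t : ℝ => t ^ a / (1 + t) ^ d) (volume.restrict (Ioi 0)) :=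
    ContinuousOn.aestronglyMeasurable
      (continuousOn_id.pow a |>.div (by fun_prop) fun t ht => by
        have : (0 : ℝ) < 1 + t := by linarith [mem_Ioi.mp ht]
        positivity) measurableSet_Ioi
  refine ((integrable_one_add_norm (E := ℝ) (r := 2) (by simp)).integrableOn).mono' hmeas ?_
  filter_upwards [ae_restrict_mem measurableSet_Ioi] with t (ht : 0 < t)
  have h1t : (1 : ℝ) ≤ 1 + t := by linarith
  rw [Real.norm_of_nonneg (by positivity), Real.norm_of_nonneg ht.le, Real.rpow_neg (by positivity),
    Real.rpow_two, div_le_iff₀ (by positivity), ← div_eq_inv_mul, le_div_iff₀ (by positivity)]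
  calc t ^ a * (1 + t) ^ 2 ≤ (1 + t) ^ a * (1 + t) ^ 2 := by gcongr; linarith
    _ = (1 + t) ^ (a + 2) := (pow_add _ _ _).symm
    _ ≤ (1 + t) ^ d := pow_le_pow_right₀ h1t h

lemma hasDerivAt_pow_div_one_add_pow (a d : ℕ) {x : ℝ} (hx : 0 ≤ x) :
    HasDerivAt (fun t : ℝ => t ^ a / (1 + t) ^ (d + 1))
      (a * (x ^ (a - 1) / (1 + x) ^ (d + 1)) - (d + 1) * (x ^ a / (1 + x) ^ (d + 2))) x := by
  have h1x : (1 : ℝ) + x ≠ 0 := by positivity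
  have hq : HasDerivAt (fun t : ℝ => (1 + t) ^ (d + 1)) ((d + 1) * (1 + x) ^ d) x := by
    simpa using ((hasDerivAt_id x).const_add 1).fun_pow (d + 1)
  refine ((hasDerivAt_pow a x).fun_div hq (pow_ne_zero _ h1x)).congr_deriv ?_
  field_simp
  ring

lemma tendsto_pow_div_one_add_pow_atTop {a d : ℕ} (h : a ≤ d) :
    Tendsto (fun t : ℝ => t ^ a / (1 + t) ^ (d + 1)) atTop (𝓝 0) := by
  have hinv : Tendsto (fun t : ℝ => (1 + t)⁻¹) atTop (𝓝 0) :=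
    tendsto_inv_atTop_zero.comp (tendsto_atTop_add_const_left _ _ tendsto_id)
  refine squeeze_zero' ?_ ?_ hinv
  · filter_upwards [eventually_ge_atTop 0] with t ht
    positivity
  · filter_upwards [eventually_ge_atTop 0] with t ht
    have h1t : (1 : ℝ) ≤ 1 + t := by linarith
    rw [div_le_iff₀ (by positivity), ← div_eq_inv_mul, le_div_iff₀ (by positivity)]
    calc t ^ a * (1 + t) ≤ (1 + t) ^ a * (1 + t) := by gcongr; linarith
      _ = (1 + t) ^ (a + 1) := (pow_succ _ _).symm
      _ ≤ (1 + t) ^ (d + 1) := pow_le_pow_right₀ h1t (by omega)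

/-- Integration by parts against `t ^ a / (1 + t) ^ (d + 1)`; `0 ^ a` is its value at `t = 0`. -/
lemma integral_pow_div_one_add_pow_recurrence {a d : ℕ} (h : a ≤ d) :
    (d + 1) * ∫ t in Ioi (0 : ℝ), t ^ a / (1 + t) ^ (d + 2) =
      0 ^ a + a * ∫ t in Ioi (0 : ℝ), t ^ (a - 1) / (1 + t) ^ (d + 1) := by
  have hint : IntegrableOn (fun t : ℝ => a * (t ^ (a - 1) / (1 + t) ^ (d + 1))) (Ioi 0) := by
    rcases a with _ | a
    · simp
    · exact (integrableOn_pow_div_one_add_pow (by omega)).const_mul _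
  have hFTC := integral_Ioi_of_hasDerivAt_of_tendsto'
    (fun x hx => hasDerivAt_pow_div_one_add_pow a d hx)
    (hint.sub ((integrableOn_pow_div_one_add_pow (by omega)).const_mul _))
    (tendsto_pow_div_one_add_pow_atTop h)
  rw [integral_sub hint ((integrableOn_pow_div_one_add_pow (by omega)).const_mul _),
    integral_const_mul, integral_const_mul] at hFTC
  simp only [add_zero, one_pow, div_one, zero_sub] at hFTC
  linarith

lemma integral_pow_div_one_add_pow (a e : ℕ) :
    ∫ t in Ioi (0 : ℝ), t ^ a / (1 + t) ^ (a + e + 2) =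
      a.factorial * e.factorial / (a + e + 1).factorial := by
  induction a with
  | zero =>
    have h := integral_pow_div_one_add_pow_recurrence (Nat.zero_le e)
    rw [pow_zero, Nat.cast_zero, zero_mul, add_zero] at h
    rw [zero_add, Nat.factorial_zero, Nat.factorial_succ, Nat.cast_one, one_mul,
      eq_div_iff (by positivity)]
    push_cast
    linear_combination (e.factorial : ℝ) * h
  | succ a ih =>
    have h := integral_pow_div_one_add_pow_recurrence (a := a + 1) (d := a + e + 1) (by omega)
    rw [zero_pow a.succ_ne_zero, zero_add, Nat.add_sub_cancel,
      show a + e + 1 + 1 = a + e + 2 by ring, ih, show a + e + 1 + 2 = a + 1 + e + 2 by ring] at h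
    rw [show a + 1 + e + 1 = a + e + 1 + 1 by ring, Nat.factorial_succ (a + e + 1),
      Nat.factorial_succ a, eq_div_iff (by positivity)]
    have hf : ((a + e + 1).factorial : ℝ) ≠ 0 := by positivity
    push_cast at h ⊢
    field_simp at h
    linear_combination h

lemma Complex.integral_comp_norm_sq {E : Type*} [NormedAddCommGroup E] [NormedSpace ℝ E]
    (g : ℝ → E) : ∫ w : ℂ, g (‖w‖ ^ 2) = Real.pi • ∫ t in Ioi (0 : ℝ), g t := by
  have hpolar := integral_fun_norm_addHaar (volume : Measure ℂ) (fun r => g (r ^ 2))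
  have hsubst := integral_comp_rpow_Ioi g (p := 2) two_ne_zero
  simp only [abs_two, Real.rpow_two, show (2 : ℝ) - 1 = 1 by norm_num, Real.rpow_one,
    mul_smul, integral_smul] at hsubst
  rw [hpolar, finrank_real_complex, ← hsubst]
  simp only [measureReal_def, Complex.volume_ball, ENNReal.ofReal_one, one_pow, one_mul,
    ENNReal.coe_toReal, NNReal.coe_real_pi, Nat.add_one_sub_one, pow_one, two_smul, smul_add]

lemma exists_circle_pow_mul_conj_pow_eq_neg_one {a b : ℕ} (hab : a ≠ b) :
    ∃ c : Circle, (c : ℂ) ^ a * conj (c : ℂ) ^ b = -1 := by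
  have hab' : (a : ℂ) - b ≠ 0 := sub_ne_zero.mpr (by exact_mod_cast hab)
  refine ⟨Circle.exp (Real.pi / (a - b)), ?_⟩
  rw [Circle.coe_exp, ← exp_conj, ← exp_nat_mul, ← exp_nat_mul, ← exp_add]
  convert exp_pi_mul_I using 2
  simp only [map_mul, conj_ofReal, conj_I]
  push_cast
  field_simp
  ring

section Moments

variable {a b δ : ℕ}

lemma integrable_pow_mul_conj_pow_div (h : a + b + 2 < 2 * δ) :
    Integrable (fun w : ℂ => w ^ a * conj w ^ b / ((1 + ‖w‖ ^ 2 : ℝ) : ℂ) ^ δ) := by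
  have hmeas : AEStronglyMeasurable
      (fun w : ℂ => w ^ a * conj w ^ b / ((1 + ‖w‖ ^ 2 : ℝ) : ℂ) ^ δ) volume :=
    (Continuous.div (by fun_prop) (by fun_prop) fun w => by
      have : (1 + ‖w‖ ^ 2 : ℝ) ≠ 0 := by positivity
      exact pow_ne_zero _ (ofReal_ne_zero.mpr this)).aestronglyMeasurable
  refine ((integrable_one_add_norm (E := ℂ) (r := (2 * δ - (a + b) : ℕ))
    (by rw [finrank_real_complex]; exact_mod_cast (by omega : 2 < 2 * δ - (a + b)))).const_mul
    (2 ^ δ)).mono' hmeas (Eventually.of_forall fun w => ?_)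
  set r := ‖w‖
  have hr : 0 ≤ r := norm_nonneg w
  rw [norm_div, norm_mul, norm_pow, norm_pow, norm_pow, norm_conj, norm_real,
    Real.norm_of_nonneg (by positivity), Real.rpow_neg (by positivity), Real.rpow_natCast,
    ← pow_add, ← div_eq_mul_inv, div_le_div_iff₀ (by positivity) (by positivity)]
  calc r ^ (a + b) * (1 + r) ^ (2 * δ - (a + b))
      ≤ (1 + r) ^ (a + b) * (1 + r) ^ (2 * δ - (a + b)) := by gcongr; linarith
    _ = ((1 + r) ^ 2) ^ δ := by rw [← pow_add, ← pow_mul]; congr 1; omega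
    _ ≤ (2 * (1 + r ^ 2)) ^ δ := by gcongr; nlinarith [sq_nonneg (1 - r)]
    _ = 2 ^ δ * (1 + r ^ 2) ^ δ := mul_pow _ _ _

lemma integral_pow_mul_conj_pow_div_eq_zero (hab : a ≠ b) :
    ∫ w : ℂ, w ^ a * conj w ^ b / ((1 + ‖w‖ ^ 2 : ℝ) : ℂ) ^ δ = 0 := by
  obtain ⟨c, hc⟩ := exists_circle_pow_mul_conj_pow_eq_neg_one hab
  have hrot := (rotation c).measurePreserving.integral_comp
    (rotation c).toHomeomorph.measurableEmbedding
    (fun w : ℂ => w ^ a * conj w ^ b / ((1 + ‖w‖ ^ 2 : ℝ) : ℂ) ^ δ)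
  have hnorm : ∀ w : ℂ, ‖(c : ℂ) * w‖ = ‖w‖ := fun w => by
    rw [norm_mul, Circle.norm_coe, one_mul]
  simp only [rotation_apply, hnorm, map_mul, mul_pow] at hrot
  have hfactor : ∀ w : ℂ, (c : ℂ) ^ a * w ^ a * (conj (c : ℂ) ^ b * conj w ^ b) /
      ((1 + ‖w‖ ^ 2 : ℝ) : ℂ) ^ δ =
      ((c : ℂ) ^ a * conj (c : ℂ) ^ b) *
        (w ^ a * conj w ^ b / ((1 + ‖w‖ ^ 2 : ℝ) : ℂ) ^ δ) := fun w => by ring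
  simp_rw [hfactor, hc, neg_one_mul, integral_neg] at hrot
  linear_combination (-1 / 2 : ℂ) * hrot

lemma integral_pow_mul_conj_pow_self_div (h : a + 2 ≤ δ) :
    ∫ w : ℂ, w ^ a * conj w ^ a / ((1 + ‖w‖ ^ 2 : ℝ) : ℂ) ^ δ =
      Real.pi * (a.factorial * (δ - a - 2).factorial / (δ - 1).factorial : ℝ) := by
  obtain ⟨e, rfl⟩ : ∃ e, δ = a + e + 2 := ⟨δ - a - 2, by omega⟩
  have hradial : ∀ w : ℂ, w ^ a * conj w ^ a / ((1 + ‖w‖ ^ 2 : ℝ) : ℂ) ^ (a + e + 2) =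
      (((‖w‖ ^ 2) ^ a / (1 + ‖w‖ ^ 2) ^ (a + e + 2) : ℝ) : ℂ) := fun w => by
    rw [← mul_pow, mul_conj, normSq_eq_norm_sq]
    push_cast
    rfl
  simp_rw [hradial]
  rw [Complex.integral_comp_norm_sq (fun t => ((t ^ a / (1 + t) ^ (a + e + 2) : ℝ) : ℂ)),
    integral_complex_ofReal, integral_pow_div_one_add_pow]
  rw [show a + e + 2 - a - 2 = e by omega, show a + e + 2 - 1 = a + e + 1 by omega,
    real_smul]

end Moments

/-- Nonvanishing case of the key integral computation (Lemma 8.1 of the paper):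
for natural numbers `α β γ δ` with `α + β + γ < 2(δ - 1)` and `β ≤ α ≤ β + γ`,
`∫_ℂ w^α conj(w)^β (1 + z conj(w))^γ / (1 + |w|²)^δ dA(w)
  = π ⬝ C(γ, α-β) ⬝ α! (δ-α-2)! / (δ-1)! ⬝ z^(α-β)`. -/
theorem stmt_0 (α β γ δ : ℕ) (hδ : α + β + γ < 2 * (δ - 1)) (z : ℂ)
    (hβα : β ≤ α) (hαβγ : α ≤ β + γ) :
    ∫ w : ℂ, w ^ α * (starRingEnd ℂ w) ^ β * (1 + z * starRingEnd ℂ w) ^ γ /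
        ((1 + ‖w‖ ^ 2 : ℝ) : ℂ) ^ δ =
      (Real.pi : ℂ) * (γ.choose (α - β) : ℂ) *
        ((α.factorial : ℂ) * ((δ - α - 2).factorial : ℂ) / ((δ - 1).factorial : ℂ)) *
        z ^ (α - β) := by
  have hexpand : ∀ w : ℂ, w ^ α * conj w ^ β * (1 + z * conj w) ^ γ /
        ((1 + ‖w‖ ^ 2 : ℝ) : ℂ) ^ δ
      = ∑ k ∈ Finset.range (γ + 1), (γ.choose k * z ^ k) *
          (w ^ α * conj w ^ (β + k) / ((1 + ‖w‖ ^ 2 : ℝ) : ℂ) ^ δ) := fun w => by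
    rw [add_comm, add_pow, Finset.mul_sum, Finset.sum_div]
    refine Finset.sum_congr rfl fun k _ => ?_
    rw [mul_pow, one_pow, pow_add]
    ring
  simp_rw [hexpand]
  rw [integral_finsetSum _ fun k hk => (integrable_pow_mul_conj_pow_div
    (by rw [Finset.mem_range] at hk; omega)).const_mul _]
  simp_rw [integral_const_mul]
  rw [Finset.sum_eq_single (α - β)]
  · rw [show β + (α - β) = α by omega, integral_pow_mul_conj_pow_self_div (by omega)]
    push_cast
    ring
  · intro k _ hk
    rw [integral_pow_mul_conj_pow_div_eq_zero (by omega), mul_zero]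
  · intro hk
    exact absurd (Finset.mem_range.mpr (by omega)) hk
end

section
/- Let α, β, γ, δ be natural numbers with α + β + γ < 2(δ − 1), and let z ∈ ℂ. If α < β or α > β + γ, then ∫_ℂ w^α · conj(w)^β · (1 + z·conj(w))^γ / (1 + |w|²)^δ dA(w) = 0. -/
/-!
Expand `(1 + z conj w)^γ` binomially. Each resulting term `w^α conj(w)^(β+k) / (1 + |w|²)^δ`
is integrable by the growth condition on `δ`, and picks up the factor `u^(α-β-k) ≠ 1` under a
suitable rotation `w ↦ u w`, which preserves Lebesgue measure; since `α ≠ β + k` for every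
`k ≤ γ`, each term integrates to zero.
-/

open MeasureTheory Complex ComplexConjugate

theorem integral_eq_zero_of_comp_mul_eq_smul {E : Type*} [NormedAddCommGroup E]
    [NormedSpace ℂ E] {f : ℂ → E} (u : Circle) {c : ℂ} (hc : c ≠ 1)
    (hf : ∀ w, f (u * w) = c • f w) :
    ∫ w, f w = 0 := by
  have hrot : ∫ w, f (u * w) = ∫ w, f w :=
    (rotation u).measurePreserving.integral_comp (rotation u).toHomeomorph.measurableEmbedding f
  simp only [hf, integral_smul] at hrot
  have hsmul : (c - 1) • ∫ w, f w = 0 := by rw [sub_smul, hrot, one_smul, sub_self]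
  exact (smul_eq_zero.mp hsmul).resolve_left (sub_ne_zero.mpr hc)

theorem Circle.exists_pow_mul_conj_pow_ne_one {n m : ℕ} (hnm : n ≠ m) :
    ∃ u : Circle, (u : ℂ) ^ n * conj (u : ℂ) ^ m ≠ 1 := by
  have hsub : (n : ℝ) - m ≠ 0 := sub_ne_zero.mpr (by exact_mod_cast hnm)
  refine ⟨Circle.exp (Real.pi / ((n : ℝ) - m)), ?_⟩
  rw [← Circle.coe_inv_eq_conj, ← Circle.coe_pow, ← Circle.coe_pow, ← Circle.coe_mul, Ne,
    Circle.coe_eq_one, inv_pow, ← zpow_natCast, ← zpow_natCast, ← zpow_neg, ← zpow_add,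
    ← sub_eq_add_neg, ← Circle.exp_intCast_mul]
  push_cast
  rw [mul_div_cancel₀ _ hsub]
  exact Circle.exp_pi_ne_one

theorem integral_pow_mul_conj_pow_mul_radial_eq_zero {n m : ℕ} (hnm : n ≠ m) (g : ℝ → ℂ) :
    ∫ w : ℂ, w ^ n * conj w ^ m * g ‖w‖ = 0 := by
  obtain ⟨u, hu⟩ := Circle.exists_pow_mul_conj_pow_ne_one hnm
  refine integral_eq_zero_of_comp_mul_eq_smul u hu fun w => ?_
  rw [norm_mul, Circle.norm_coe, one_mul, map_mul, mul_pow, mul_pow, smul_eq_mul]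
  ring

theorem norm_pow_le_one_add_norm_sq_rpow {E : Type*} [SeminormedAddCommGroup E] (x : E) (k : ℕ) :
    ‖x‖ ^ k ≤ (1 + ‖x‖ ^ 2) ^ ((k : ℝ) / 2) :=
  calc ‖x‖ ^ k ≤ √(1 + ‖x‖ ^ 2) ^ k :=
        pow_le_pow_left₀ (norm_nonneg x) (Real.le_sqrt_of_sq_le (by linarith)) k
    _ = (1 + ‖x‖ ^ 2) ^ ((k : ℝ) / 2) := by
        rw [Real.sqrt_eq_rpow, ← Real.rpow_natCast, ← Real.rpow_mul (by positivity)]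
        ring_nf

theorem integrable_pow_mul_conj_pow_div_one_add_norm_sq_pow {n m δ : ℕ}
    (h : n + m + 2 < 2 * δ) :
    Integrable fun w : ℂ => w ^ n * conj w ^ m / ((1 + ‖w‖ ^ 2 : ℝ) : ℂ) ^ δ := by
  have hdim : (Module.finrank ℝ ℂ : ℝ) < 2 * δ - (n + m : ℕ) := by
    rw [Complex.finrank_real_complex]
    have : ((n + m + 2 : ℕ) : ℝ) < (2 * δ : ℕ) := by exact_mod_cast h
    push_cast at this ⊢
    linarith
  refine (integrable_rpow_neg_one_add_norm_sq hdim).mono' (by fun_prop : Measurable _).aestronglyMeasurable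
    (Filter.Eventually.of_forall fun w => ?_)
  have hpos : (0 : ℝ) < 1 + ‖w‖ ^ 2 := by positivity
  calc ‖w ^ n * conj w ^ m / ((1 + ‖w‖ ^ 2 : ℝ) : ℂ) ^ δ‖
      = ‖w‖ ^ (n + m) / (1 + ‖w‖ ^ 2) ^ δ := by
        rw [norm_div, norm_mul, norm_pow, norm_pow, norm_pow, RCLike.norm_conj, norm_real,
          Real.norm_of_nonneg hpos.le, pow_add]
    _ ≤ (1 + ‖w‖ ^ 2) ^ (((n + m : ℕ) : ℝ) / 2) / (1 + ‖w‖ ^ 2) ^ δ := by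
        gcongr
        exact norm_pow_le_one_add_norm_sq_rpow w (n + m)
    _ = (1 + ‖w‖ ^ 2) ^ (-(2 * δ - (n + m : ℕ) : ℝ) / 2) := by
        rw [← Real.rpow_natCast _ δ, ← Real.rpow_sub hpos]
        ring_nf

/-- Vanishing case of the key integral computation (Lemma 8.1 of the paper):
for natural numbers `α β γ δ` with `α + β + γ < 2(δ - 1)`, if `α < β` or `α > β + γ`, then
`∫_ℂ w^α conj(w)^β (1 + z conj(w))^γ / (1 + |w|²)^δ dA(w) = 0`. -/
theorem stmt_1 (α β γ δ : ℕ) (hδ : α + β + γ < 2 * (δ - 1)) (z : ℂ)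
    (h : α < β ∨ β + γ < α) :
    ∫ w : ℂ, w ^ α * (starRingEnd ℂ w) ^ β * (1 + z * starRingEnd ℂ w) ^ γ /
        ((1 + ‖w‖ ^ 2 : ℝ) : ℂ) ^ δ = 0 := by
  set term : ℕ → ℂ → ℂ := fun k w => w ^ α * conj w ^ (β + k) / ((1 + ‖w‖ ^ 2 : ℝ) : ℂ) ^ δ
  have hexpand : ∀ w : ℂ, w ^ α * conj w ^ β * (1 + z * conj w) ^ γ /
      ((1 + ‖w‖ ^ 2 : ℝ) : ℂ) ^ δ =
        ∑ k ∈ Finset.range (γ + 1), (γ.choose k * z ^ k : ℂ) * term k w := by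
    intro w
    rw [add_comm 1, add_pow, Finset.mul_sum, Finset.sum_div]
    refine Finset.sum_congr rfl fun k _ => ?_
    simp only [term, mul_pow, pow_add, one_pow, mul_one]
    ring
  have hk : ∀ k ∈ Finset.range (γ + 1), α + (β + k) + 2 < 2 * δ ∧ α ≠ β + k := fun k hk => by
    have := Finset.mem_range_succ_iff.mp hk
    omega
  calc _ = ∫ w, ∑ k ∈ Finset.range (γ + 1), (γ.choose k * z ^ k : ℂ) * term k w :=
        integral_congr_ae (Filter.Eventually.of_forall hexpand)
    _ = ∑ k ∈ Finset.range (γ + 1), (γ.choose k * z ^ k : ℂ) * ∫ w, term k w := by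
        rw [integral_finsetSum _ fun k hk' =>
          (integrable_pow_mul_conj_pow_div_one_add_norm_sq_pow (hk k hk').1).const_mul _]
        simp only [integral_const_mul, term]
    _ = 0 := Finset.sum_eq_zero fun k hk' => by
        simp only [term, div_eq_mul_inv]
        rw [integral_pow_mul_conj_pow_mul_radial_eq_zero (hk k hk').2
          (fun r => (((1 + r ^ 2 : ℝ) : ℂ) ^ δ)⁻¹), mul_zero]
end

section
/- Let k be a natural number, let P be a polynomial with complex coefficients of degree at most k, and let z ∈ ℂ. Then the function w ↦ (1 + z·conj(w))^k / (1 + |w|²)^(k+2) · P(w) is Lebesgue-integrable on ℂ and ((k+1)/π) · ∫_ℂ (1 + z·conj(w))^k / (1 + |w|²)^(k+2) · P(w) dA(w) = P(z). -/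
open MeasureTheory Complex Polynomial

/-!
Expanding `(1 + z w̄)^k` by the binomial theorem reduces the claim to the monomials `P = X^i`,
`i ≤ k`. In polar coordinates `w̄^j w^i = r^(i+j) exp((i-j)θ I)`, so the angular integral kills
every term with `j ≠ i`, and the surviving radial moment
`∫₀^∞ r^(2i+1) / (1 + r²)^(k+2) dr = i! (k-i)! / (2 (k+1)!)` follows from an integration by parts
that trades `r²` in the numerator for a factor `1 + r²` in the denominator. The binomial
coefficient `k.choose i` cancels the factorials, leaving `π / (k + 1) · z^i`.
-/

open Finset Set Filter
open scoped Real Topology Nat ComplexConjugate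

lemma pow_le_one_add_sq_pow {r : ℝ} (hr : 0 ≤ r) {m k : ℕ} (hm : m ≤ 2 * k) :
    r ^ m ≤ (1 + r ^ 2) ^ k := by
  calc r ^ m ≤ max 1 r ^ m := pow_le_pow_left₀ hr (le_max_right 1 r) m
    _ ≤ max 1 r ^ (2 * k) := pow_le_pow_right₀ (le_max_left 1 r) hm
    _ = (max 1 r ^ 2) ^ k := pow_mul _ 2 k
    _ ≤ (1 + r ^ 2) ^ k := by
      gcongr
      rcases le_total 1 r with h | h
      · rw [max_eq_right h]; linarith
      · rw [max_eq_left h]; nlinarith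

lemma pow_div_one_add_sq_pow_le {r : ℝ} (hr : 0 ≤ r) {m k : ℕ} (hm : m ≤ 2 * k) (l : ℕ) :
    r ^ m / (1 + r ^ 2) ^ (k + l) ≤ ((1 + r ^ 2) ^ l)⁻¹ := by
  have hpos : 0 < 1 + r ^ 2 := by positivity
  calc r ^ m / (1 + r ^ 2) ^ (k + l) ≤ (1 + r ^ 2) ^ k / (1 + r ^ 2) ^ (k + l) := by
        gcongr; exact pow_le_one_add_sq_pow hr hm
    _ = ((1 + r ^ 2) ^ l)⁻¹ := by rw [pow_add]; field_simp

lemma tendsto_one_add_sq_pow_atTop {k : ℕ} (hk : k ≠ 0) :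
    Tendsto (fun r : ℝ => (1 + r ^ 2) ^ k) atTop atTop :=
  (tendsto_pow_atTop hk).comp <| tendsto_atTop_add_const_left _ 1 (tendsto_pow_atTop two_ne_zero)

lemma integrableOn_pow_div_one_add_sq_pow (n m : ℕ) :
    IntegrableOn (fun r : ℝ => r ^ (2 * n + 1) / (1 + r ^ 2) ^ (n + m + 2)) (Ioi 0) := by
  refine integrable_inv_one_add_sq.integrableOn.mono'
    (Continuous.aestronglyMeasurable (by fun_prop (disch := intros; positivity))) ?_
  filter_upwards [ae_restrict_mem measurableSet_Ioi] with r (hr : 0 < r)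
  rw [Real.norm_of_nonneg (by positivity)]
  simpa using pow_div_one_add_sq_pow_le hr.le (by omega : 2 * n + 1 ≤ 2 * (n + m + 1)) 1

lemma integral_div_one_add_sq_pow (m : ℕ) :
    ∫ r in Ioi (0 : ℝ), r / (1 + r ^ 2) ^ (m + 2) = (2 * (m + 1 : ℝ))⁻¹ := by
  have hderiv : ∀ r ∈ Ici (0 : ℝ),
      HasDerivAt (fun r : ℝ => -(2 * (m + 1 : ℝ))⁻¹ * ((1 + r ^ 2) ^ (m + 1))⁻¹)
        (r / (1 + r ^ 2) ^ (m + 2)) r := by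
    intro r _
    have hpos : 0 < 1 + r ^ 2 := by positivity
    refine (((((hasDerivAt_pow 2 r).const_add 1).fun_pow (m + 1)).fun_inv
      (pow_ne_zero _ hpos.ne')).const_mul _).congr_deriv ?_
    field_simp
    push_cast
    ring
  have hlim : Tendsto (fun r : ℝ => -(2 * (m + 1 : ℝ))⁻¹ * ((1 + r ^ 2) ^ (m + 1))⁻¹)
      atTop (𝓝 0) := by
    simpa using (tendsto_one_add_sq_pow_atTop m.succ_ne_zero).inv_tendsto_atTop.const_mul
      (-(2 * (m + 1 : ℝ))⁻¹)
  rw [integral_Ioi_of_hasDerivAt_of_tendsto' hderiv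
    (by simpa using integrableOn_pow_div_one_add_sq_pow 0 m) hlim]
  simp

lemma integral_pow_div_one_add_sq_pow_recursion (n m : ℕ) :
    (n + 1 : ℝ) * ∫ r in Ioi (0 : ℝ), r ^ (2 * n + 1) / (1 + r ^ 2) ^ (n + (m + 1) + 2) =
      (m + 1 : ℝ) * ∫ r in Ioi (0 : ℝ), r ^ (2 * (n + 1) + 1) / (1 + r ^ 2) ^ (n + 1 + m + 2) := by
  have hderiv : ∀ r ∈ Ici (0 : ℝ),
      HasDerivAt (fun r : ℝ => r ^ (2 * n + 2) * ((1 + r ^ 2) ^ (n + m + 2))⁻¹)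
      ((2 * n + 2) * (r ^ (2 * n + 1) / (1 + r ^ 2) ^ (n + (m + 1) + 2)) -
        (2 * m + 2) * (r ^ (2 * (n + 1) + 1) / (1 + r ^ 2) ^ (n + 1 + m + 2))) r := by
    intro r _
    have hpos : 0 < 1 + r ^ 2 := by positivity
    refine ((hasDerivAt_pow (2 * n + 2) r).fun_mul ((((hasDerivAt_pow 2 r).const_add 1).fun_pow
      (n + m + 2)).fun_inv (pow_ne_zero _ hpos.ne'))).congr_deriv ?_
    field_simp
    push_cast
    ring
  have hlim : Tendsto (fun r : ℝ => r ^ (2 * n + 2) * ((1 + r ^ 2) ^ (n + m + 2))⁻¹)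
      atTop (𝓝 0) := by
    refine squeeze_zero' ((eventually_ge_atTop 0).mono fun r hr => by positivity)
      ((eventually_ge_atTop 0).mono fun r hr => ?_)
      (tendsto_one_add_sq_pow_atTop one_ne_zero).inv_tendsto_atTop
    simpa [← div_eq_mul_inv] using
      pow_div_one_add_sq_pow_le hr (by omega : 2 * n + 2 ≤ 2 * (n + m + 1)) 1
  have hint₁ := integrableOn_pow_div_one_add_sq_pow n (m + 1)
  have hint₂ := integrableOn_pow_div_one_add_sq_pow (n + 1) m
  have hFTC := integral_Ioi_of_hasDerivAt_of_tendsto' hderiv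
    ((hint₁.const_mul _).sub (hint₂.const_mul _)) hlim
  rw [integral_sub (hint₁.const_mul _) (hint₂.const_mul _), integral_const_mul,
    integral_const_mul] at hFTC
  norm_num at hFTC
  linarith

theorem integral_pow_div_one_add_sq_pow (n m : ℕ) :
    ∫ r in Ioi (0 : ℝ), r ^ (2 * n + 1) / (1 + r ^ 2) ^ (n + m + 2) =
      (n ! * m ! / (2 * (n + m + 1) !) : ℝ) := by
  induction n generalizing m with
  | zero =>
    simp only [mul_zero, zero_add, pow_one, Nat.factorial_zero, Nat.factorial_succ]
    rw [integral_div_one_add_sq_pow]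
    push_cast
    field_simp
  | succ n ih =>
    have hrec := integral_pow_div_one_add_sq_pow_recursion n m
    rw [ih (m + 1), show n + (m + 1) + 1 = n + 1 + m + 1 by ring] at hrec
    have hm : (m + 1 : ℝ) ≠ 0 := by positivity
    rw [← mul_right_inj' hm, ← hrec]
    push_cast [Nat.factorial_succ]
    field_simp

lemma integral_exp_int_mul_mul_I (n : ℤ) :
    ∫ θ in Ioo (-π) π, exp (n * θ * I) = (if n = 0 then 2 * π else 0 : ℂ) := by
  split_ifs with hn
  · simp [hn, Real.volume_real_Ioo_of_le (by linarith [Real.pi_pos] : -π ≤ π), two_mul]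
  · have hc : (n : ℂ) * I ≠ 0 := mul_ne_zero (Int.cast_ne_zero.mpr hn) I_ne_zero
    rw [← integral_Ioc_eq_integral_Ioo,
      ← intervalIntegral.integral_of_le (by linarith [Real.pi_pos] : -π ≤ π)]
    simp_rw [mul_right_comm _ _ I]
    have hperiodic : exp (n * I * π) = exp (n * I * ↑(-π)) :=
      exp_eq_exp_iff_exists_int.2 ⟨n, by push_cast; ring⟩
    rw [integral_exp_mul_complex hc, hperiodic, sub_self, zero_div]

lemma conj_pow_mul_pow_polarCoord_symm (i j : ℕ) (r θ : ℝ) :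
    conj (Complex.polarCoord.symm (r, θ)) ^ j * Complex.polarCoord.symm (r, θ) ^ i =
      (r : ℂ) ^ (i + j) * exp (((i - j : ℤ) : ℂ) * θ * I) := by
  have hpolar : Complex.polarCoord.symm (r, θ) = r * exp (θ * I) := by
    rw [Complex.polarCoord_symm_apply, exp_mul_I]
    push_cast
    ring
  have hconj : conj (exp (θ * I)) = (exp (θ * I))⁻¹ := by
    rw [← exp_conj, map_mul, conj_ofReal, conj_I, ← exp_neg, mul_neg]
  rw [hpolar, map_mul, conj_ofReal, hconj, mul_pow, mul_pow, inv_pow, ← exp_nat_mul,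
    ← exp_nat_mul, ← exp_neg, mul_mul_mul_comm, ← pow_add, add_comm j, ← exp_add]
  push_cast
  ring_nf

theorem integral_conj_pow_mul_pow_mul_radial (i j : ℕ) (g : ℝ → ℂ) :
    ∫ w : ℂ, conj w ^ j * w ^ i * g ‖w‖ =
      if i = j then 2 * π * ∫ r in Ioi (0 : ℝ), (r : ℂ) ^ (2 * i + 1) * g r else 0 := by
  rw [← Complex.integral_comp_polarCoord_symm, polarCoord_target,
    Measure.volume_eq_prod]
  have hpolar : ∀ p ∈ Ioi (0 : ℝ) ×ˢ Ioo (-π) π,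
      p.1 • (conj (Complex.polarCoord.symm p) ^ j * Complex.polarCoord.symm p ^ i *
        g ‖Complex.polarCoord.symm p‖) =
        (p.1 : ℂ) ^ (i + j + 1) * g p.1 * exp (((i - j : ℤ) : ℂ) * p.2 * I) := by
    rintro ⟨r, θ⟩ ⟨hr, -⟩
    rw [Complex.norm_polarCoord_symm, abs_of_pos hr, real_smul,
      conj_pow_mul_pow_polarCoord_symm]
    ring
  rw [setIntegral_congr_fun (measurableSet_Ioi.prod measurableSet_Ioo) hpolar,
    setIntegral_prod_mul (fun r : ℝ => (r : ℂ) ^ (i + j + 1) * g r)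
      (fun θ : ℝ => exp (((i - j : ℤ) : ℂ) * θ * I)),
    integral_exp_int_mul_mul_I]
  rcases eq_or_ne i j with rfl | hij
  · simp only [sub_self, if_true, ← two_mul, mul_comm]
  · simp [sub_eq_zero, hij]

lemma integrable_conj_pow_mul_pow_div_one_add_sq_pow {i j k : ℕ} (hij : i + j ≤ 2 * k) :
    Integrable fun w : ℂ => conj w ^ j * w ^ i / ((1 + ‖w‖ ^ 2 : ℝ) : ℂ) ^ (k + 2) := by
  have hdim : (Module.finrank ℝ ℂ : ℝ) < 4 := by
    rw [Complex.finrank_real_complex]; norm_num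
  refine (integrable_rpow_neg_one_add_norm_sq hdim).mono'
    (by fun_prop : Measurable _).aestronglyMeasurable
    (Eventually.of_forall fun w => ?_)
  have hpos : 0 < 1 + ‖w‖ ^ 2 := by positivity
  rw [show -(4 : ℝ) / 2 = -(2 : ℕ) by norm_num, Real.rpow_neg hpos.le, Real.rpow_natCast,
    norm_div, norm_mul, norm_pow, norm_pow, norm_pow, norm_conj, norm_real,
    Real.norm_of_nonneg hpos.le, ← pow_add, add_comm j]
  exact pow_div_one_add_sq_pow_le (norm_nonneg w) hij 2

lemma integral_conj_pow_mul_pow_div_one_add_sq_pow_of_ne {i j : ℕ} (hij : i ≠ j) (l : ℕ) :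
    ∫ w : ℂ, conj w ^ j * w ^ i / ((1 + ‖w‖ ^ 2 : ℝ) : ℂ) ^ l = 0 := by
  simp_rw [div_eq_mul_inv]
  exact (integral_conj_pow_mul_pow_mul_radial i j fun r => (((1 + r ^ 2 : ℝ) : ℂ) ^ l)⁻¹).trans
    (if_neg hij)

lemma integral_conj_pow_mul_pow_div_one_add_sq_pow (i m : ℕ) :
    ∫ w : ℂ, conj w ^ i * w ^ i / ((1 + ‖w‖ ^ 2 : ℝ) : ℂ) ^ (i + m + 2) =
      π * i ! * m ! / (i + m + 1)! := by
  simp_rw [div_eq_mul_inv]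
  rw [integral_conj_pow_mul_pow_mul_radial i i fun r => (((1 + r ^ 2 : ℝ) : ℂ) ^ (i + m + 2))⁻¹,
    if_pos rfl]
  have hradial :
      ∫ r in Ioi (0 : ℝ), (r : ℂ) ^ (2 * i + 1) * (((1 + r ^ 2 : ℝ) : ℂ) ^ (i + m + 2))⁻¹ =
        ((i ! * m ! / (2 * (i + m + 1) !) : ℝ) : ℂ) := by
    rw [← integral_pow_div_one_add_sq_pow, ← integral_complex_ofReal]
    push_cast
    rfl
  rw [hradial]
  push_cast
  field_simp

/-- The Bergman kernel `Π_k(z, w)` without its normalising factor `(k + 1) / π`. -/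
noncomputable def bergmanKernel (k : ℕ) (z w : ℂ) : ℂ :=
  (1 + z * conj w) ^ k / ((1 + ‖w‖ ^ 2 : ℝ) : ℂ) ^ (k + 2)

lemma bergmanKernel_mul_pow_eq_sum (k i : ℕ) (z w : ℂ) :
    bergmanKernel k z w * w ^ i = ∑ j ∈ range (k + 1),
      (k.choose j * z ^ j) * (conj w ^ j * w ^ i / ((1 + ‖w‖ ^ 2 : ℝ) : ℂ) ^ (k + 2)) := by
  rw [bergmanKernel, add_comm, add_pow, sum_div, sum_mul]
  refine sum_congr rfl fun j _ => ?_
  ring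

lemma integrable_bergmanKernel_mul_pow {k i : ℕ} (hi : i ≤ k) (z : ℂ) :
    Integrable fun w => bergmanKernel k z w * w ^ i := by
  simp_rw [bergmanKernel_mul_pow_eq_sum]
  exact integrable_finsetSum _ fun j hj =>
    (integrable_conj_pow_mul_pow_div_one_add_sq_pow (by grind)).const_mul _

lemma integral_bergmanKernel_mul_pow {k i : ℕ} (hi : i ≤ k) (z : ℂ) :
    ∫ w, bergmanKernel k z w * w ^ i = π / (k + 1) * z ^ i := by
  simp_rw [bergmanKernel_mul_pow_eq_sum]
  rw [integral_finsetSum _ fun j hj =>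
    (integrable_conj_pow_mul_pow_div_one_add_sq_pow (by grind)).const_mul _]
  simp_rw [integral_const_mul]
  rw [sum_eq_single_of_mem i (mem_range.2 (by omega)) fun j _ hji => by
    rw [integral_conj_pow_mul_pow_div_one_add_sq_pow_of_ne (Ne.symm hji), mul_zero]]
  obtain ⟨m, rfl⟩ := Nat.exists_eq_add_of_le hi
  rw [integral_conj_pow_mul_pow_div_one_add_sq_pow]
  have hchoose : ((i + m).choose i * i ! * m ! : ℂ) = (i + m)! := by
    exact_mod_cast Nat.choose_symm_add ▸ Nat.add_choose_mul_factorial_mul_factorial i m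
  have hfact : ((i + m)! : ℂ) ≠ 0 := Nat.cast_ne_zero.2 (Nat.factorial_ne_zero _)
  have hsucc : (i + m + 1 : ℂ) ≠ 0 := by exact_mod_cast (i + m).succ_ne_zero
  rw [Nat.factorial_succ]
  push_cast
  field_simp
  linear_combination z ^ i * hchoose

/-- Reproducing property of the Bergman kernel
`Π_k(z,w) = ((k+1)/π) (1 + z conj(w))^k (1 + |w|²)^(-(k+2))` on the space of complex
polynomials of degree at most `k` (Section 8 of the paper). -/
theorem stmt_4 (k : ℕ) (P : Polynomial ℂ) (hP : P.natDegree ≤ k) (z : ℂ) :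
    Integrable (fun w : ℂ =>
      (1 + z * starRingEnd ℂ w) ^ k / ((1 + ‖w‖ ^ 2 : ℝ) : ℂ) ^ (k + 2) *
        P.eval w) ∧
    ((k : ℂ) + 1) / (Real.pi : ℂ) *
        ∫ w : ℂ, (1 + z * starRingEnd ℂ w) ^ k /
            ((1 + ‖w‖ ^ 2 : ℝ) : ℂ) ^ (k + 2) * P.eval w =
      P.eval z := by
  have heval (x : ℂ) : P.eval x = ∑ i ∈ range (k + 1), P.coeff i * x ^ i :=
    eval_eq_sum_range' (Nat.lt_succ_of_le hP) x
  have hexpand : (fun w => bergmanKernel k z w * P.eval w) =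
      fun w => ∑ i ∈ range (k + 1), P.coeff i * (bergmanKernel k z w * w ^ i) := by
    ext w
    rw [heval, mul_sum]
    exact sum_congr rfl fun i _ => mul_left_comm _ _ _
  have hterm : ∀ i ∈ range (k + 1),
      Integrable fun w => P.coeff i * (bergmanKernel k z w * w ^ i) :=
    fun i hi => (integrable_bergmanKernel_mul_pow (mem_range_succ_iff.1 hi) z).const_mul _
  change Integrable (fun w => bergmanKernel k z w * P.eval w) ∧
    (k + 1) / π * ∫ w, bergmanKernel k z w * P.eval w = P.eval z
  refine ⟨hexpand ▸ integrable_finsetSum _ hterm, ?_⟩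
  rw [hexpand, integral_finsetSum _ hterm, heval z, mul_sum]
  refine sum_congr rfl fun i hi => ?_
  rw [integral_const_mul, integral_bergmanKernel_mul_pow (mem_range_succ_iff.1 hi) z]
  field_simp
end

section
/- Let k ≥ 4 be a natural number, let ℓ be a natural number with 2 ≤ ℓ ≤ k − 2, and let z ∈ ℂ. Then ((k+1)/π) · ∫_ℂ (1 + z·conj(w))^(k−2) · (z + conj(w))² / (1 + |w|²)^(k+2) · w^ℓ dA(w) = (1/(k choose ℓ)) · ( (k−2 choose ℓ) · z^(ℓ+2) + 2·(k−2 choose ℓ−1) · z^ℓ + (k−2 choose ℓ−2) · z^(ℓ−2) ). -/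
/-!
Expanding `(1 + z w̄)^(k-2) (z + w̄)^2` as a polynomial in `w̄`, the integral reduces to the
moments `∫ w̄^m w^ℓ (1 + |w|²)^(-N)`. Rotation invariance kills those with `m ≠ ℓ`, and the
substitution `u = r²/(1 + r²)` turns the diagonal ones into Beta integrals
`π ℓ! (N-ℓ-2)! / (N-1)!`. Only the coefficient of `w̄^ℓ` survives, namely
`C(k-2,ℓ) z^(ℓ+2) + 2 C(k-2,ℓ-1) z^ℓ + C(k-2,ℓ-2) z^(ℓ-2)`, and
`(k+1) ℓ! (k-ℓ)! / (k+1)! = 1 / C(k,ℓ)`.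
-/

open MeasureTheory Complex Polynomial
open scoped Nat

theorem integral_Ioo_pow_mul_one_sub_pow (a b : ℕ) :
    ∫ u in Set.Ioo (0 : ℝ) 1, u ^ a * (1 - u) ^ b = (a ! * b ! : ℝ) / (a + b + 1)! := by
  have hbeta : betaIntegral (a + 1) (b + 1)
      = ((∫ u in Set.Ioo (0 : ℝ) 1, u ^ a * (1 - u) ^ b : ℝ) : ℂ) := by
    rw [betaIntegral, intervalIntegral.integral_of_le zero_le_one, integral_Ioc_eq_integral_Ioo,
      ← integral_complex_ofReal]
    refine setIntegral_congr_fun measurableSet_Ioo fun u _ => ?_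
    simp [← cpow_natCast]
  have hgamma := Gamma_mul_Gamma_eq_betaIntegral (s := a + 1) (t := b + 1)
    (by simp only [add_re, natCast_re, one_re]; positivity)
    (by simp only [add_re, natCast_re, one_re]; positivity)
  rw [show (a + 1 : ℂ) + (b + 1) = ((a + b + 1 : ℕ) : ℂ) + 1 by push_cast; ring, hbeta,
    Gamma_nat_eq_factorial, Gamma_nat_eq_factorial, Gamma_nat_eq_factorial] at hgamma
  rw [eq_div_iff (by positivity)]
  exact_mod_cast (hgamma.trans (mul_comm _ _)).symm

theorem image_sq_div_one_add_sq_Ioi :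
    (fun r : ℝ => r ^ 2 / (1 + r ^ 2)) '' Set.Ioi 0 = Set.Ioo 0 1 := by
  ext u
  constructor
  · rintro ⟨r, hr, rfl⟩
    have : 0 < r ^ 2 := pow_pos hr 2
    exact ⟨by positivity, (div_lt_one (by positivity)).2 (by linarith)⟩
  · rintro ⟨hu0, hu1⟩
    have h1u : 0 < 1 - u := by linarith
    refine ⟨√(u / (1 - u)), Real.sqrt_pos.2 (by positivity), ?_⟩
    simp only [Real.sq_sqrt (by positivity : 0 ≤ u / (1 - u))]
    field_simp
    ring

theorem integral_Ioi_pow_div_one_add_sq_pow (l n : ℕ) :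
    ∫ r in Set.Ioi (0 : ℝ), r ^ (2 * l + 1) / (1 + r ^ 2) ^ (l + n + 2)
      = (l ! * n ! : ℝ) / (2 * (l + n + 1)!) := by
  have hderiv : ∀ r ∈ Set.Ioi (0 : ℝ), HasDerivWithinAt (fun r : ℝ => r ^ 2 / (1 + r ^ 2))
      (2 * r / (1 + r ^ 2) ^ 2) (Set.Ioi 0) r := by
    intro r _
    refine (((hasDerivAt_pow 2 r).fun_div ((hasDerivAt_pow 2 r).const_add 1)
      (by positivity)).congr_deriv ?_).hasDerivWithinAt
    push_cast
    ring
  have hinj : Set.InjOn (fun r : ℝ => r ^ 2 / (1 + r ^ 2)) (Set.Ioi 0) := by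
    intro a (ha : 0 < a) b (hb : 0 < b) hab
    simp only at hab
    field_simp at hab
    nlinarith
  have hsubst := integral_image_eq_integral_abs_deriv_smul measurableSet_Ioi hderiv hinj
    (fun u => u ^ l * (1 - u) ^ n)
  rw [image_sq_div_one_add_sq_Ioi, integral_Ioo_pow_mul_one_sub_pow] at hsubst
  rw [div_mul_eq_div_div_swap, hsubst, ← integral_div]
  refine setIntegral_congr_fun measurableSet_Ioi fun r (hr : 0 < r) => ?_
  have hcompl : 1 - r ^ 2 / (1 + r ^ 2) = 1 / (1 + r ^ 2) := by field_simp; ring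
  rw [smul_eq_mul, abs_of_pos (by positivity), hcompl, div_pow, one_div_pow]
  field_simp
  ring

theorem Complex.integral_fun_norm (f : ℝ → ℂ) :
    ∫ w : ℂ, f ‖w‖ = 2 * Real.pi * ∫ r in Set.Ioi (0 : ℝ), r * f r := by
  rw [integral_fun_norm_addHaar volume f, Complex.finrank_real_complex, Measure.real,
    Complex.volume_ball]
  simp [real_smul, mul_assoc]

theorem integral_conj_pow_mul_pow_div_one_add_sq_pow_self (l n : ℕ) :
    ∫ w : ℂ, (starRingEnd ℂ) w ^ l * w ^ l / ((1 + ‖w‖ ^ 2 : ℝ) : ℂ) ^ (l + n + 2)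
      = Real.pi * l ! * n ! / (l + n + 1)! := by
  have hradial : ∀ w : ℂ, (starRingEnd ℂ) w ^ l * w ^ l / ((1 + ‖w‖ ^ 2 : ℝ) : ℂ) ^ (l + n + 2)
      = ((‖w‖ ^ (2 * l) / (1 + ‖w‖ ^ 2) ^ (l + n + 2) : ℝ) : ℂ) := by
    intro w
    rw [← mul_pow, conj_mul', pow_mul]
    push_cast
    ring
  simp_rw [hradial]
  rw [Complex.integral_fun_norm (fun r => ((r ^ (2 * l) / (1 + r ^ 2) ^ (l + n + 2) : ℝ) : ℂ))]
  have hreal : ∫ r in Set.Ioi (0 : ℝ), (r : ℂ) * ((r ^ (2 * l) / (1 + r ^ 2) ^ (l + n + 2) : ℝ) : ℂ)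
      = ((∫ r in Set.Ioi (0 : ℝ), r ^ (2 * l + 1) / (1 + r ^ 2) ^ (l + n + 2) : ℝ) : ℂ) := by
    rw [← integral_complex_ofReal]
    congr! 2 with r
    push_cast
    ring
  rw [hreal, integral_Ioi_pow_div_one_add_sq_pow]
  push_cast
  field_simp

theorem conj_exp_pow_mul_exp_pow (θ : ℝ) (m l : ℕ) :
    (starRingEnd ℂ) (exp (θ * I)) ^ m * exp (θ * I) ^ l
      = exp ((((l : ℝ) - m : ℝ) : ℂ) * θ * I) := by
  rw [← exp_conj, map_mul, conj_ofReal, conj_I, ← exp_nat_mul, ← exp_nat_mul, ← exp_add]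
  push_cast
  ring_nf

theorem integral_conj_pow_mul_pow_mul_comp_norm_eq_zero (g : ℝ → ℂ) {m l : ℕ} (hml : m ≠ l) :
    ∫ w : ℂ, (starRingEnd ℂ) w ^ m * w ^ l * g ‖w‖ = 0 := by
  set F : ℂ → ℂ := fun w => (starRingEnd ℂ) w ^ m * w ^ l * g ‖w‖
  have hd : (l : ℝ) - m ≠ 0 := sub_ne_zero.2 (by exact_mod_cast hml.symm)
  set a : Circle := Circle.exp (Real.pi / ((l : ℝ) - m))
  have hrot : ∀ w, F (rotation a w) = -F w := by
    intro w
    have ha : (starRingEnd ℂ) a ^ m * (a : ℂ) ^ l = -1 := by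
      rw [Circle.coe_exp, conj_exp_pow_mul_exp_pow, ← ofReal_mul, mul_div_cancel₀ _ hd,
        exp_pi_mul_I]
    simp only [F, rotation_apply, map_mul, mul_pow, norm_mul, Circle.norm_coe, one_mul]
    linear_combination ((starRingEnd ℂ) w ^ m * w ^ l * g ‖w‖) * ha
  have hinv := (rotation a).measurePreserving.integral_comp
    (rotation a).toHomeomorph.measurableEmbedding F
  simp only [hrot, integral_neg] at hinv
  exact neg_eq_self.1 hinv

theorem integrable_conj_pow_mul_pow_div_one_add_sq_pow_s6 {m l N : ℕ} (h : m + l + 2 < 2 * N) :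
    Integrable fun w : ℂ => (starRingEnd ℂ) w ^ m * w ^ l / ((1 + ‖w‖ ^ 2 : ℝ) : ℂ) ^ N := by
  have hdim : (Module.finrank ℝ ℂ : ℝ) < (2 * N - (m + l) : ℕ) := by
    rw [Complex.finrank_real_complex]
    exact_mod_cast (by omega : 2 < 2 * N - (m + l))
  refine ((integrable_one_add_norm hdim).const_mul (2 ^ N)).mono'
    (by fun_prop : Measurable _).aestronglyMeasurable (.of_forall fun w => ?_)
  have hnorm : ‖(starRingEnd ℂ) w ^ m * w ^ l / ((1 + ‖w‖ ^ 2 : ℝ) : ℂ) ^ N‖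
      = ‖w‖ ^ (m + l) / (1 + ‖w‖ ^ 2) ^ N := by
    rw [norm_div, norm_mul, norm_pow, norm_pow, norm_pow, RCLike.norm_conj, norm_real,
      Real.norm_of_nonneg (by positivity), pow_add]
  rw [hnorm, Real.rpow_neg (by positivity), Real.rpow_natCast, ← div_eq_mul_inv,
    div_le_div_iff₀ (by positivity) (by positivity)]
  calc ‖w‖ ^ (m + l) * (1 + ‖w‖) ^ (2 * N - (m + l))
      ≤ (1 + ‖w‖) ^ (m + l) * (1 + ‖w‖) ^ (2 * N - (m + l)) := by gcongr; linarith
    _ = ((1 + ‖w‖) ^ 2) ^ N := by rw [← pow_add, ← pow_mul]; congr 1; omega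
    _ ≤ (2 * (1 + ‖w‖ ^ 2)) ^ N := by gcongr; nlinarith [sq_nonneg (1 - ‖w‖)]
    _ = 2 ^ N * (1 + ‖w‖ ^ 2) ^ N := mul_pow _ _ _

theorem integral_conj_pow_mul_pow_div_one_add_sq_pow_s6 (m l n : ℕ) :
    ∫ w : ℂ, (starRingEnd ℂ) w ^ m * w ^ l / ((1 + ‖w‖ ^ 2 : ℝ) : ℂ) ^ (l + n + 2)
      = if m = l then (Real.pi : ℂ) * l ! * n ! / (l + n + 1)! else 0 := by
  split_ifs with hml
  · rw [hml, integral_conj_pow_mul_pow_div_one_add_sq_pow_self]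
  · simp_rw [div_eq_mul_inv]
    exact integral_conj_pow_mul_pow_mul_comp_norm_eq_zero
      (fun r => (((1 + r ^ 2 : ℝ) : ℂ) ^ (l + n + 2))⁻¹) hml

theorem integral_eval_conj_mul_pow_div_one_add_sq_pow (p : ℂ[X]) (l n : ℕ)
    (hp : p.natDegree < l + 2 * n + 2) :
    ∫ w : ℂ, p.eval ((starRingEnd ℂ) w) * w ^ l / ((1 + ‖w‖ ^ 2 : ℝ) : ℂ) ^ (l + n + 2)
      = (Real.pi : ℂ) * l ! * n ! / (l + n + 1)! * p.coeff l := by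
  have hterm : ∀ i ∈ Finset.range (p.natDegree + 1), Integrable fun w : ℂ =>
      p.coeff i * ((starRingEnd ℂ) w ^ i * w ^ l / ((1 + ‖w‖ ^ 2 : ℝ) : ℂ) ^ (l + n + 2)) := by
    intro i hi
    exact (integrable_conj_pow_mul_pow_div_one_add_sq_pow_s6
      (by rw [Finset.mem_range] at hi; omega)).const_mul _
  have hexpand : ∀ w : ℂ,
      p.eval ((starRingEnd ℂ) w) * w ^ l / ((1 + ‖w‖ ^ 2 : ℝ) : ℂ) ^ (l + n + 2)
        = ∑ i ∈ Finset.range (p.natDegree + 1),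
          p.coeff i * ((starRingEnd ℂ) w ^ i * w ^ l / ((1 + ‖w‖ ^ 2 : ℝ) : ℂ) ^ (l + n + 2)) := by
    intro w
    rw [eval_eq_sum_range, Finset.sum_mul, Finset.sum_div]
    exact Finset.sum_congr rfl fun i _ => by ring
  simp_rw [hexpand]
  rw [integral_finsetSum _ hterm]
  simp_rw [integral_const_mul, integral_conj_pow_mul_pow_div_one_add_sq_pow_s6, mul_ite, mul_zero,
    Finset.sum_ite_eq', Finset.mem_range, Nat.lt_succ_iff]
  split_ifs with hl
  · ring
  · rw [coeff_eq_zero_of_natDegree_lt (not_le.1 hl), mul_zero]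

theorem Polynomial.coeff_one_add_C_mul_X_pow {R : Type*} [CommSemiring R] (a : R) (n j : ℕ) :
    ((1 + C a * X) ^ n).coeff j = n.choose j * a ^ j := by
  rw [add_comm, add_pow, finsetSum_coeff]
  simp_rw [one_pow, mul_one, mul_pow, ← C_pow, ← Polynomial.C_eq_natCast, mul_comm _ (C _),
    ← mul_assoc, ← C_mul, coeff_C_mul_X_pow]
  rw [Finset.sum_ite_eq]
  split_ifs with hj
  · ring
  · rw [Finset.mem_range, not_lt] at hj
    rw [Nat.choose_eq_zero_of_lt (by omega), Nat.cast_zero, zero_mul]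

theorem Polynomial.coeff_one_add_C_mul_X_pow_mul_C_add_X_sq {R : Type*} [CommSemiring R]
    (a : R) (n : ℕ) {ℓ : ℕ} (hℓ : 2 ≤ ℓ) :
    ((1 + C a * X) ^ n * (C a + X) ^ 2).coeff ℓ
      = n.choose ℓ * a ^ (ℓ + 2) + 2 * n.choose (ℓ - 1) * a ^ ℓ
          + n.choose (ℓ - 2) * a ^ (ℓ - 2) := by
  obtain ⟨j, rfl⟩ : ∃ j, ℓ = j + 2 := ⟨ℓ - 2, by omega⟩
  have hsq : (C a + X) ^ 2 = C (a ^ 2) + C (2 * a) * X + X ^ 2 := by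
    simp only [C_mul, C_pow, C_ofNat]
    ring
  rw [hsq, mul_add, mul_add, ← mul_assoc, coeff_add, coeff_add, coeff_mul_C, coeff_mul_X,
    coeff_mul_C, coeff_mul_X_pow, coeff_one_add_C_mul_X_pow, coeff_one_add_C_mul_X_pow,
    coeff_one_add_C_mul_X_pow, Nat.add_sub_cancel, show j + 2 - 1 = j + 1 by omega]
  ring

theorem add_one_mul_factorial_mul_factorial_div_factorial {k ℓ : ℕ} (h : ℓ ≤ k) :
    ((k : ℂ) + 1) * ℓ ! * (k - ℓ)! / (k + 1)! = 1 / k.choose ℓ := by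
  rw [Nat.cast_choose ℂ h, Nat.factorial_succ]
  push_cast
  field_simp

theorem stmt_6_general (k : ℕ) (ℓ : ℕ) (hℓ₁ : 2 ≤ ℓ) (hℓ₂ : ℓ ≤ k - 2) (z : ℂ) :
    ((k : ℂ) + 1) / (Real.pi : ℂ) *
        ∫ w : ℂ, (1 + z * starRingEnd ℂ w) ^ (k - 2) * (z + starRingEnd ℂ w) ^ 2 /
            ((1 + ‖w‖ ^ 2 : ℝ) : ℂ) ^ (k + 2) * w ^ ℓ =
      1 / (k.choose ℓ : ℂ) *
        (((k - 2).choose ℓ : ℂ) * z ^ (ℓ + 2) + 2 * ((k - 2).choose (ℓ - 1) : ℂ) * z ^ ℓ +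
          ((k - 2).choose (ℓ - 2) : ℂ) * z ^ (ℓ - 2)) := by
  set P : ℂ[X] := (1 + C z * X) ^ (k - 2) * (C z + X) ^ 2
  have hℓk : ℓ ≤ k := by omega
  have hdeg : P.natDegree < ℓ + 2 * (k - ℓ) + 2 := by
    have : P.natDegree ≤ k - 2 + 2 := by
      simp only [P]
      compute_degree
    omega
  have hintegrand : ∀ w : ℂ,
      (1 + z * starRingEnd ℂ w) ^ (k - 2) * (z + starRingEnd ℂ w) ^ 2 /
          ((1 + ‖w‖ ^ 2 : ℝ) : ℂ) ^ (k + 2) * w ^ ℓ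
        = P.eval (starRingEnd ℂ w) * w ^ ℓ / ((1 + ‖w‖ ^ 2 : ℝ) : ℂ) ^ (ℓ + (k - ℓ) + 2) := by
    intro w
    simp only [P, Nat.add_sub_cancel' hℓk, eval_mul, eval_pow, eval_add, eval_one, eval_C, eval_X]
    ring
  simp_rw [hintegrand]
  rw [integral_eval_conj_mul_pow_div_one_add_sq_pow P _ _ hdeg,
    coeff_one_add_C_mul_X_pow_mul_C_add_X_sq z _ hℓ₁, Nat.add_sub_cancel' hℓk,
    ← add_one_mul_factorial_mul_factorial_div_factorial hℓk]
  field_simp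

/-- Monomial form of the computation of `T_k^{cov}(x₁²)` (Section 8 of the paper):
the covariant Berezin–Toeplitz operator of `x₁²` on `S² ≅ ℂP¹` acts on the monomial
`w^ℓ` (for `2 ≤ ℓ ≤ k-2`) by the stated combination of `z^(ℓ+2)`, `z^ℓ`, `z^(ℓ-2)`. -/
theorem stmt_6 (k : ℕ) (hk : 4 ≤ k) (ℓ : ℕ) (hℓ₁ : 2 ≤ ℓ) (hℓ₂ : ℓ ≤ k - 2) (z : ℂ) :
    ((k : ℂ) + 1) / (Real.pi : ℂ) *
        ∫ w : ℂ, (1 + z * starRingEnd ℂ w) ^ (k - 2) * (z + starRingEnd ℂ w) ^ 2 /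
            ((1 + ‖w‖ ^ 2 : ℝ) : ℂ) ^ (k + 2) * w ^ ℓ =
      1 / (k.choose ℓ : ℂ) *
        (((k - 2).choose ℓ : ℂ) * z ^ (ℓ + 2) + 2 * ((k - 2).choose (ℓ - 1) : ℂ) * z ^ ℓ +
          ((k - 2).choose (ℓ - 2) : ℂ) * z ^ (ℓ - 2)) :=
  stmt_6_general k ℓ hℓ₁ hℓ₂ z
end

section
/- Let k ≥ 0 and ε ≥ 0 be real numbers, let a ≤ b and δ > 0 be real numbers, let x₀ ∈ [a,b], and let u : ℝ² → ℂ be continuously differentiable on an open set containing the rectangle R = [a,b] × [−δ,δ]. Assume that on R one has ∂u/∂x + i·∂u/∂ξ = −i·k·ξ·u and |∂u/∂x (x,ξ)| ≤ ε. Then for every (x, ξ) ∈ R, |u(x, ξ) − u(x₀, 0)·exp(−k·ξ²/2)| ≤ ε·( |ξ| + |x − x₀|·exp(−k·ξ²/2) ). -/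
open Complex Set

/-! Along `ξ` the equation reads `∂_ξ u = -k ξ u + i ∂_x u`, so with the integrating factor
`e^{k ξ²/2}` the function `ξ ↦ u (x, ξ) e^{k ξ²/2}` has derivative of norm at most
`ε e^{k ξ²/2}` between `0` and `ξ`; the mean value inequality then gives
`‖u (x, ξ) - u (x, 0) e^{-k ξ²/2}‖ ≤ ε |ξ|`. Along `ξ = 0` it gives
`‖u (x, 0) - u (x₀, 0)‖ ≤ ε |x - x₀|`, and the triangle inequality combines the two. -/

theorem HasFDerivAt.hasDerivAt_comp_prodMk_const {F G : Type*} [NormedAddCommGroup F]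
    [NormedSpace ℝ F] [NormedAddCommGroup G] [NormedSpace ℝ G] {u : ℝ × F → G}
    {L : ℝ × F →L[ℝ] G} {x : ℝ} {y : F} (hu : HasFDerivAt u L (x, y)) :
    HasDerivAt (fun s => u (s, y)) (L (1, 0)) x :=
  hu.comp_hasDerivAt x ((hasDerivAt_id x).prodMk (hasDerivAt_const x y))

theorem HasFDerivAt.hasDerivAt_comp_const_prodMk {E G : Type*} [NormedAddCommGroup E]
    [NormedSpace ℝ E] [NormedAddCommGroup G] [NormedSpace ℝ G] {u : E × ℝ → G}
    {L : E × ℝ →L[ℝ] G} {x : E} {t : ℝ} (hu : HasFDerivAt u L (x, t)) :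
    HasDerivAt (fun s => u (x, s)) (L (0, 1)) t :=
  hu.comp_hasDerivAt t ((hasDerivAt_const t x).prodMk (hasDerivAt_id t))

theorem sq_le_sq_of_mem_uIcc_zero {t ξ : ℝ} (ht : t ∈ uIcc 0 ξ) : t ^ 2 ≤ ξ ^ 2 := by
  rcases mem_uIcc.1 ht with ⟨h₁, h₂⟩ | ⟨h₁, h₂⟩ <;> nlinarith

theorem HasDerivAt.mul_exp_half_mul_sq {v : ℝ → ℂ} {w : ℂ} {k t : ℝ}
    (hv : HasDerivAt v (-(k * t) * v t + w) t) :
    HasDerivAt (fun s => v s * (Real.exp (k * s ^ 2 / 2) : ℂ))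
      (w * (Real.exp (k * t ^ 2 / 2) : ℂ)) t := by
  have hexp : HasDerivAt (fun s => Real.exp (k * s ^ 2 / 2))
      (Real.exp (k * t ^ 2 / 2) * (k * t)) t := by
    have := (((hasDerivAt_pow 2 t).const_mul k).div_const 2).exp
    convert this using 1
    norm_num
    ring
  exact (hv.mul hexp.ofReal_comp).congr_deriv (by push_cast; ring)

theorem norm_sub_mul_exp_le_of_hasDerivAt {v w : ℝ → ℂ} {k ε ξ : ℝ} (hk : 0 ≤ k)
    (hv : ∀ t ∈ uIcc 0 ξ, HasDerivAt v (-(k * t) * v t + w t) t)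
    (hw : ∀ t ∈ uIcc 0 ξ, ‖w t‖ ≤ ε) :
    ‖v ξ - v 0 * (Real.exp (-(k * ξ ^ 2) / 2) : ℂ)‖ ≤ ε * |ξ| := by
  set E : ℝ → ℝ := fun t => Real.exp (k * t ^ 2 / 2)
  have hε : 0 ≤ ε := (norm_nonneg _).trans (hw 0 left_mem_uIcc)
  have hg : ‖v ξ * (E ξ : ℂ) - v 0 * (E 0 : ℂ)‖ ≤ ε * E ξ * ‖ξ - 0‖ := by
    refine (convex_uIcc 0 ξ).norm_image_sub_le_of_norm_hasDerivWithin_le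
      (f := fun s => v s * (E s : ℂ))
      (fun t ht => (hv t ht).mul_exp_half_mul_sq.hasDerivWithinAt) (fun t ht => ?_)
      left_mem_uIcc right_mem_uIcc
    rw [norm_mul, Complex.norm_real, Real.norm_of_nonneg (Real.exp_pos _).le]
    refine mul_le_mul (hw t ht) (Real.exp_le_exp.2 ?_) (Real.exp_pos _).le hε
    have := sq_le_sq_of_mem_uIcc_zero ht
    gcongr
  have hE : Real.exp (-(k * ξ ^ 2) / 2) = (E ξ)⁻¹ := by
    rw [← Real.exp_neg]; ring_nf
  have hEpos : 0 < E ξ := Real.exp_pos _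
  have hsplit : v ξ - v 0 * (Real.exp (-(k * ξ ^ 2) / 2) : ℂ) =
      (v ξ * (E ξ : ℂ) - v 0 * (E 0 : ℂ)) * ((E ξ)⁻¹ : ℝ) := by
    have hne : (E ξ : ℂ) ≠ 0 := Complex.ofReal_ne_zero.2 hEpos.ne'
    rw [hE, show E 0 = 1 by simp [E], Complex.ofReal_inv, Complex.ofReal_one]
    field_simp
  rw [hsplit, norm_mul, Complex.norm_real, Real.norm_of_nonneg (inv_pos.2 hEpos).le]
  rw [sub_zero, Real.norm_eq_abs] at hg
  calc _ ≤ ε * E ξ * |ξ| * (E ξ)⁻¹ := by gcongr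
    _ = ε * |ξ| := by field_simp

theorem stmt_11_general (k ε : ℝ) (hk : 0 ≤ k) (a b δ : ℝ)
    (x₀ : ℝ) (hx₀ : x₀ ∈ Icc a b) (u : ℝ × ℝ → ℂ)
    (V : Set (ℝ × ℝ)) (hV : IsOpen V) (hRV : Icc a b ×ˢ Icc (-δ) δ ⊆ V)
    (hu : ContDiffOn ℝ 1 u V)
    (heq : ∀ p ∈ Icc a b ×ˢ Icc (-δ) δ,
      fderiv ℝ u p (1, 0) + Complex.I * fderiv ℝ u p (0, 1) =
        -Complex.I * (k : ℂ) * (p.2 : ℂ) * u p)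
    (hquasi : ∀ p ∈ Icc a b ×ˢ Icc (-δ) δ, ‖fderiv ℝ u p (1, 0)‖ ≤ ε) :
    ∀ p ∈ Icc a b ×ˢ Icc (-δ) δ,
      ‖u p - u (x₀, 0) * ((Real.exp (-(k * p.2 ^ 2) / 2) : ℝ) : ℂ)‖ ≤
        ε * (|p.2| + |p.1 - x₀| * Real.exp (-(k * p.2 ^ 2) / 2)) := by
  have hdiff : ∀ q ∈ Icc a b ×ˢ Icc (-δ) δ, HasFDerivAt u (fderiv ℝ u q) q := fun q hq =>
    ((hu.differentiableOn one_ne_zero).differentiableAt (hV.mem_nhds (hRV hq))).hasFDerivAt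
  rintro ⟨x, ξ⟩ ⟨hx, hξ⟩
  have h0 : (0 : ℝ) ∈ Icc (-δ) δ := by
    obtain ⟨h₁, h₂⟩ := hξ
    constructor <;> linarith
  have hx_dir : ‖u (x, 0) - u (x₀, 0)‖ ≤ ε * |x - x₀| := by
    have := (convex_Icc a b).norm_image_sub_le_of_norm_hasDerivWithin_le
      (fun s hs => (hdiff _ ⟨hs, h0⟩).hasDerivAt_comp_prodMk_const.hasDerivWithinAt)
      (fun s hs => hquasi _ ⟨hs, h0⟩) hx₀ hx
    rwa [Real.norm_eq_abs] at this
  have hξ_dir : ‖u (x, ξ) - u (x, 0) * (Real.exp (-(k * ξ ^ 2) / 2) : ℂ)‖ ≤ ε * |ξ| := by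
    have hsub : uIcc 0 ξ ⊆ Icc (-δ) δ := ordConnected_Icc.uIcc_subset h0 hξ
    refine norm_sub_mul_exp_le_of_hasDerivAt (v := fun t => u (x, t))
      (w := fun t => I * fderiv ℝ u (x, t) (1, 0)) hk (fun t ht => ?_) (fun t ht => ?_)
    · have hmem : (x, t) ∈ Icc a b ×ˢ Icc (-δ) δ := ⟨hx, hsub ht⟩
      refine (hdiff _ hmem).hasDerivAt_comp_const_prodMk.congr_deriv ?_
      linear_combination -I * heq _ hmem + (k * t * u (x, t) + fderiv ℝ u (x, t) (0, 1)) * I_sq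
    · simpa using hquasi (x, t) ⟨hx, hsub ht⟩
  set e := Real.exp (-(k * ξ ^ 2) / 2)
  calc ‖u (x, ξ) - u (x₀, 0) * (e : ℂ)‖
      = ‖(u (x, ξ) - u (x, 0) * (e : ℂ)) + (u (x, 0) - u (x₀, 0)) * (e : ℂ)‖ := by ring_nf
    _ ≤ ε * |ξ| + ε * |x - x₀| * e := by
        grw [norm_add_le, norm_mul, hξ_dir, hx_dir, Complex.norm_real,
          Real.norm_of_nonneg (Real.exp_pos _).le]
    _ = ε * (|ξ| + |x - x₀| * e) := by ring

/-- Quantitative double-Duhamel estimate at the core of Proposition 5.5 of the paper: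
if `u` is `C¹` near the rectangle `R = [a,b] × [-δ,δ]`, satisfies the Bargmann-space
equation `∂u/∂x + i ∂u/∂ξ = -i k ξ u` on `R`, and `|∂u/∂x| ≤ ε` on `R`, then on `R`,
`|u(x,ξ) - u(x₀,0) e^{-kξ²/2}| ≤ ε (|ξ| + |x - x₀| e^{-kξ²/2})`. -/
theorem stmt_11 (k ε : ℝ) (hk : 0 ≤ k) (hε : 0 ≤ ε) (a b δ : ℝ) (hab : a ≤ b)
    (hδ : 0 < δ) (x₀ : ℝ) (hx₀ : x₀ ∈ Icc a b) (u : ℝ × ℝ → ℂ)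
    (V : Set (ℝ × ℝ)) (hV : IsOpen V) (hRV : Icc a b ×ˢ Icc (-δ) δ ⊆ V)
    (hu : ContDiffOn ℝ 1 u V)
    (heq : ∀ p ∈ Icc a b ×ˢ Icc (-δ) δ,
      fderiv ℝ u p (1, 0) + Complex.I * fderiv ℝ u p (0, 1) =
        -Complex.I * (k : ℂ) * (p.2 : ℂ) * u p)
    (hquasi : ∀ p ∈ Icc a b ×ˢ Icc (-δ) δ, ‖fderiv ℝ u p (1, 0)‖ ≤ ε) :
    ∀ p ∈ Icc a b ×ˢ Icc (-δ) δ,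
      ‖u p - u (x₀, 0) * ((Real.exp (-(k * p.2 ^ 2) / 2) : ℝ) : ℂ)‖ ≤
        ε * (|p.2| + |p.1 - x₀| * Real.exp (-(k * p.2 ^ 2) / 2)) :=
  stmt_11_general k ε hk a b δ x₀ hx₀ u V hV hRV hu heq hquasi
end

section
/- Let V be a real vector space and let J : V → V be a linear map with J ∘ J = −id. Let F be a linear subspace of V with F ∩ J(F) = {0}. Define the subspace G = { (v + J w, v − J w) : v, w ∈ F } of V × V and the linear map J̃ : V × V → V × V, (a, b) ↦ (J a, J b). Then G ∩ J̃(G) = {(0,0)}. -/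
/-!
If `(x, y) = (v + Jw, v - Jw)` also equals `J̃ (a + Jb, a - Jb) = (Ja - b, Ja + b)`, then adding and
subtracting the two components gives `v = Ja` and `Jw = -b`. So `v` and `w` are vectors of `F`
whose images under `J` again lie in `F`, and such vectors vanish when `F` is totally real.
-/

theorem eq_and_eq_of_add_eq_add_of_sub_eq_sub {M : Type*} [AddCommGroup M] [IsAddTorsionFree M]
    {a b c d : M} (hadd : a + b = c + d) (hsub : a - b = c - d) : a = c ∧ b = d := by
  have hac : a = c := by
    refine nsmul_right_injective two_ne_zero ?_
    calc 2 • a = (a + b) + (a - b) := by abel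
      _ = (c + d) + (c - d) := by rw [hadd, hsub]
      _ = 2 • c := by abel
  exact ⟨hac, by rwa [hac, add_right_inj] at hadd⟩

theorem eq_zero_of_mem_of_apply_mem {R V : Type*} [Ring R] [AddCommGroup V] [Module R V]
    {J : V →ₗ[R] V} (hJ : ∀ v : V, J (J v) = -v) {F : Submodule R V}
    (hF : (F : Set V) ∩ (J '' (F : Set V)) = {0}) {x : V} (hx : x ∈ F) (hJx : J x ∈ F) :
    x = 0 := by
  have hJx0 : J x = 0 := by
    have : J x ∈ (F : Set V) ∩ (J '' (F : Set V)) := ⟨hJx, x, hx, rfl⟩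
    rwa [hF] at this
  simpa [hJx0] using hJ x

/-- Linear-algebra core of Proposition 3.7 of the paper: if `(V, J)` is a vector space
with a complex structure (`J ∘ J = -id`) and `F` is a totally real subspace
(`F ∩ J(F) = {0}`), then `G = {(v + Jw, v - Jw) : v, w ∈ F}` is totally real in
`V × V` for the complex structure `J̃ = (J, J)`. -/
theorem stmt_13 {V : Type*} [AddCommGroup V] [Module ℝ V] (J : V →ₗ[ℝ] V)
    (hJ : ∀ v : V, J (J v) = -v) (F : Submodule ℝ V)
    (hF : (F : Set V) ∩ (J '' (F : Set V)) = {0}) :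
    {p : V × V | ∃ v ∈ F, ∃ w ∈ F, p = (v + J w, v - J w)} ∩
        ((fun p : V × V => (J p.1, J p.2)) ''
          {p : V × V | ∃ v ∈ F, ∃ w ∈ F, p = (v + J w, v - J w)}) =
      {((0 : V), (0 : V))} := by
  have : IsAddTorsionFree V := .of_isTorsionFree ℝ V
  ext p
  constructor
  · rintro ⟨⟨v, hv, w, hw, rfl⟩, _, ⟨a, ha, b, hb, rfl⟩, himage⟩
    obtain ⟨hfst, hsnd⟩ := Prod.mk.inj himage
    rw [map_add, hJ] at hfst
    rw [map_sub, hJ] at hsnd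
    obtain ⟨hv_eq, hJw_eq⟩ := eq_and_eq_of_add_eq_add_of_sub_eq_sub hfst.symm hsnd.symm
    have hv0 : v = 0 :=
      eq_zero_of_mem_of_apply_mem hJ hF hv (by rw [hv_eq, hJ]; exact F.neg_mem ha)
    have hw0 : w = 0 :=
      eq_zero_of_mem_of_apply_mem hJ hF hw (hJw_eq ▸ F.neg_mem hb)
    simp [hv0, hw0]
  · rintro rfl
    have hzero : ((0 : V), (0 : V)) ∈
        {p : V × V | ∃ v ∈ F, ∃ w ∈ F, p = (v + J w, v - J w)} :=
      ⟨0, F.zero_mem, 0, F.zero_mem, by simp⟩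
    exact ⟨hzero, _, hzero, by simp⟩
end
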